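/- arXiv:1403.7759 — 2 statements merged into one kernel-verified Lean document; each statement's English description precedes it below -/
import Mathlib

section
/- For every natural number n and complex number a with (2a-2)_k ≠ 0 for 0 ≤ k ≤ 2n and a-1 ≠ 0, ∑_{k=0}^{2n} (-2n)_k (a)_k 2^k / ((2a-2)_k k!) = ((1/2)_n / (a-1/2)_n) · (1 + 2n/(a-1)). -/
/-!
Put `b = a - 1` and `F m = ₂F₁(-m, b; 2b; 2)`. Since `b (b+1)_k = (b+k) (b)_k` and
`k (-m-1)_k = (m+1) ((-m-1)_k - (-m)_k)`, the sum in question is `F(2n) + 2n (F(2n) - F(2n-1)) / b`.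
Gauss's contiguous relation in the numerator parameter `-m` loses its middle term at `z = 2`
and becomes `(2b + m + 1) F(m+2) = (m+1) F(m)`; with `F 0 = 1` and `F 1 = 0` this gives
`F(2n+1) = 0` and `F(2n) = (1/2)_n / (b + 1/2)_n`.
-/

open Finset

/-- The Pochhammer symbol (rising factorial) `(x)_k = x (x+1) ⋯ (x+k-1)`. -/
noncomputable def poch (x : ℂ) (k : ℕ) : ℂ := (ascPochhammer ℂ k).eval x

lemma poch_succ (x : ℂ) (k : ℕ) : poch x (k + 1) = poch x k * (x + k) :=
  ascPochhammer_succ_eval k x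

lemma poch_mul_add (x : ℂ) (k : ℕ) : poch x k * (x + k) = x * poch (x + 1) k := by
  rw [← poch_succ]
  simp [poch, ascPochhammer_succ_left, Polynomial.eval_comp]

lemma poch_neg_natCast_of_lt {m k : ℕ} (h : m < k) : poch (-(m : ℂ)) k = 0 :=
  ascPochhammer_eval_neg_coe_nat_of_lt h

lemma poch_ne_zero_iff {x : ℂ} {k : ℕ} : poch x k ≠ 0 ↔ ∀ i < k, x + i ≠ 0 := by
  simp [poch, eq_neg_iff_add_eq_zero, add_comm]

noncomputable def hyp2F1Term (m : ℕ) (a c z : ℂ) (k : ℕ) : ℂ :=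
  poch (-(m : ℂ)) k * poch a k * z ^ k / (poch c k * k.factorial)

noncomputable def hyp2F1 (m : ℕ) (a c z : ℂ) : ℂ :=
  ∑ k ∈ range (m + 1), hyp2F1Term m a c z k

section

variable (m : ℕ) (a c z : ℂ)

lemma hyp2F1Term_eq_zero_of_lt {k : ℕ} (h : m < k) : hyp2F1Term m a c z k = 0 := by
  simp [hyp2F1Term, poch_neg_natCast_of_lt h]

lemma sum_range_hyp2F1Term_of_lt {N : ℕ} (h : m < N) :
    ∑ k ∈ range N, hyp2F1Term m a c z k = hyp2F1 m a c z := by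
  refine (sum_subset (range_subset_range.2 h) fun k _ hk => ?_).symm
  exact hyp2F1Term_eq_zero_of_lt m a c z (by simpa using hk)

lemma hyp2F1Term_succ {k : ℕ} (hc : c + k ≠ 0) :
    (c + k) * (k + 1) * hyp2F1Term m a c z (k + 1)
      = (k - m) * (a + k) * z * hyp2F1Term m a c z k := by
  have hk : (k : ℂ) + 1 ≠ 0 := k.cast_add_one_ne_zero
  simp only [hyp2F1Term, poch_succ, Nat.factorial_succ, pow_succ, Nat.cast_mul, Nat.cast_succ]
  field_simp
  ring

lemma hyp2F1Term_succ_left (k : ℕ) :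
    (k - (m + 1)) * hyp2F1Term (m + 1) a c z k = -(m + 1) * hyp2F1Term m a c z k := by
  have h := poch_mul_add (-((m : ℂ) + 1)) k
  rw [show -((m : ℂ) + 1) + 1 = -m by ring] at h
  simp only [hyp2F1Term, Nat.cast_succ]
  linear_combination (poch a k * z ^ k / (poch c k * k.factorial)) * h

lemma mul_hyp2F1Term_add_one (k : ℕ) :
    a * hyp2F1Term m (a + 1) c z k = (a + k) * hyp2F1Term m a c z k := by
  simp only [hyp2F1Term]
  linear_combination -(poch (-(m : ℂ)) k * z ^ k / (poch c k * k.factorial)) * poch_mul_add a k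

lemma mul_hyp2F1_add_one :
    a * hyp2F1 m (a + 1) c z
      = a * hyp2F1 m a c z + ∑ k ∈ range (m + 1), k * hyp2F1Term m a c z k := by
  simp only [hyp2F1, mul_sum, mul_hyp2F1Term_add_one, add_mul, sum_add_distrib]

lemma sum_mul_hyp2F1Term_succ :
    ∑ k ∈ range (m + 2), k * hyp2F1Term (m + 1) a c z k
      = (m + 1) * (hyp2F1 (m + 1) a c z - hyp2F1 m a c z) := by
  have h (k : ℕ) : k * hyp2F1Term (m + 1) a c z k
      = (m + 1) * hyp2F1Term (m + 1) a c z k - (m + 1) * hyp2F1Term m a c z k := by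
    linear_combination hyp2F1Term_succ_left m a c z k
  rw [sum_congr rfl fun k _ => h k, sum_sub_distrib, ← mul_sum, ← mul_sum,
    sum_range_hyp2F1Term_of_lt m a c z (by omega), mul_sub]
  rfl

end

section

variable (b : ℂ)

lemma mul_hyp2F1_add_two (m : ℕ) (hb : ∀ i < m + 2, 2 * b + i ≠ 0) :
    (2 * b + m + 1) * hyp2F1 (m + 2) b (2 * b) 2 = (m + 1) * hyp2F1 m b (2 * b) 2 := by
  let T := hyp2F1Term (m + 2) b (2 * b) 2
  -- Gosper's algorithm applied to the left side of `cert` produces `g`.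
  let g : ℕ → ℂ := fun k => k * (2 * b + k - 1) * T k
  have cert : ∀ k ∈ range (m + 2), (m + 2) * (2 * b + m + 1) * T k
      - (m + 2) * (m + 1) * hyp2F1Term m b (2 * b) 2 k = g k - g (k + 1) := by
    intro k hk
    have hT : (2 * b + k) * (k + 1) * T (k + 1) = (k - (m + 2)) * (b + k) * 2 * T k := by
      simpa using hyp2F1Term_succ (m + 2) b (2 * b) 2 (hb k (mem_range.1 hk))
    have h₁ : (k - (m + 2)) * T k = -(m + 2) * hyp2F1Term (m + 1) b (2 * b) 2 k := by
      simpa [add_assoc, one_add_one_eq_two] using hyp2F1Term_succ_left (m + 1) b (2 * b) 2 k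
    have h₂ := hyp2F1Term_succ_left m b (2 * b) 2 k
    simp only [g, Nat.cast_add, Nat.cast_one]
    linear_combination hT - (m + 2) * h₂ + (k - (m + 1)) * h₁
  have hsum := sum_congr rfl cert
  rw [sum_range_sub', sum_sub_distrib, ← mul_sum, ← mul_sum,
    sum_range_hyp2F1Term_of_lt m b (2 * b) 2 (by omega)] at hsum
  have hm : (m : ℂ) + 2 ≠ 0 := by exact_mod_cast (m + 1).succ_ne_zero
  apply mul_left_cancel₀ hm
  rw [hyp2F1, sum_range_succ]
  simp only [g] at hsum
  push_cast at hsum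
  linear_combination hsum

lemma hyp2F1_two_mul_add_one (n : ℕ) (hb : ∀ i < 2 * n + 1, 2 * b + i ≠ 0) :
    hyp2F1 (2 * n + 1) b (2 * b) 2 = 0 := by
  induction n with
  | zero =>
    have hb₀ : b ≠ 0 := by simpa using hb 0 one_pos
    simp [hyp2F1, hyp2F1Term, sum_range_succ, poch]
    field_simp
    ring
  | succ n ih =>
    have hrec := mul_hyp2F1_add_two b (2 * n + 1) fun i hi => hb i (by omega)
    rw [ih fun i hi => hb i (by omega), mul_zero] at hrec
    have hne : 2 * b + (2 * n + 1 : ℕ) + 1 ≠ 0 := by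
      convert hb (2 * n + 2) (by omega) using 1
      push_cast
      ring
    exact (mul_eq_zero.1 hrec).resolve_left hne

lemma hyp2F1_two_mul (n : ℕ) (hb : ∀ i < 2 * n, 2 * b + i ≠ 0) :
    hyp2F1 (2 * n) b (2 * b) 2 = poch (1 / 2) n / poch (b + 1 / 2) n := by
  induction n with
  | zero => simp [hyp2F1, hyp2F1Term, poch]
  | succ n ih =>
    have hrec := mul_hyp2F1_add_two b (2 * n) fun i hi => hb i (by omega)
    have hne : 2 * b + (2 * n + 1 : ℕ) ≠ 0 := hb (2 * n + 1) (by omega)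
    rw [ih fun i hi => hb i (by omega)] at hrec
    rw [mul_add, mul_one, poch_succ, poch_succ]
    push_cast at hrec hne ⊢
    rw [show (1 / 2 + n : ℂ) = (2 * n + 1) / 2 by ring,
      show b + 1 / 2 + n = (2 * b + 2 * n + 1) / 2 by ring,
      mul_div_mul_comm, div_div_div_cancel_right₀ two_ne_zero, mul_div_assoc',
      eq_div_iff (by rwa [← add_assoc] at hne)]
    linear_combination hrec

lemma sum_mul_hyp2F1Term_two_mul (n : ℕ) (hb : ∀ i < 2 * n, 2 * b + i ≠ 0) :
    ∑ k ∈ range (2 * n + 1), k * hyp2F1Term (2 * n) b (2 * b) 2 k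
      = 2 * n * hyp2F1 (2 * n) b (2 * b) 2 := by
  rcases n with _ | n
  · simp
  · show ∑ k ∈ range (2 * n + 1 + 2), k * hyp2F1Term (2 * n + 1 + 1) b (2 * b) 2 k
      = 2 * ((n + 1 : ℕ) : ℂ) * hyp2F1 (2 * n + 1 + 1) b (2 * b) 2
    rw [sum_mul_hyp2F1Term_succ, hyp2F1_two_mul_add_one b n fun i hi => hb i (by omega)]
    push_cast
    ring

end

theorem twoF1_neg2n_a_twoAm2 (n : ℕ) (a : ℂ) (h : ∀ k ≤ 2 * n, poch (2 * a - 2) k ≠ 0)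
    (ha : a - 1 ≠ 0) :
    ∑ k ∈ range (2 * n + 1),
        poch (-(2 * n : ℂ)) k * poch a k * 2 ^ k / (poch (2 * a - 2) k * (k.factorial : ℂ))
      = poch (1 / 2) n / poch (a - 1 / 2) n * (1 + 2 * n / (a - 1)) := by
  obtain ⟨b, rfl⟩ : ∃ b, a = b + 1 := ⟨a - 1, by ring⟩
  rw [show 2 * (b + 1) - 2 = 2 * b by ring] at h ⊢
  rw [add_sub_cancel_right] at ha ⊢
  rw [show b + 1 - 1 / 2 = b + 1 / 2 by ring]
  have hb : ∀ i < 2 * n, 2 * b + i ≠ 0 := poch_ne_zero_iff.1 (h (2 * n) le_rfl)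
  have key := mul_hyp2F1_add_one (2 * n) b (2 * b) 2
  rw [sum_mul_hyp2F1Term_two_mul b n hb, hyp2F1_two_mul b n hb] at key
  have hS : ∑ k ∈ range (2 * n + 1), poch (-(2 * n : ℂ)) k * poch (b + 1) k * 2 ^ k
      / (poch (2 * b) k * (k.factorial : ℂ)) = hyp2F1 (2 * n) (b + 1) (2 * b) 2 := by
    simp [hyp2F1, hyp2F1Term]
  rw [hS, eq_comm, ← mul_right_inj' ha, key]
  field_simp
end

section
/- For natural numbers n and j with j ≤ n (so that (-2n+j)_k ≠ 0 for 0 ≤ k ≤ n) and any complex number a, ∑_{k=0}^{n} (-n)_k (a)_k 2^k / ((-2n+j)_k k!) = (2^{2n-j} (n-j)! / (2n-j)!) · ∑_{r=0}^{j} C(j,r) ((a+1-r)/2)_n. -/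
open Finset

lemma poch_succ_left (x : ℂ) (k : ℕ) : poch x (k + 1) = x * poch (x + 1) k := by
  simp only [poch, ascPochhammer_succ_left, Polynomial.eval_mul, Polynomial.eval_X,
    Polynomial.eval_comp, Polynomial.eval_add, Polynomial.eval_one]

lemma poch_sub_one (a : ℂ) (k : ℕ) : poch (a - 1) k = poch a k - k * poch a (k - 1) := by
  cases k with
  | zero => simp [poch]
  | succ k =>
    rw [poch_succ_left, sub_add_cancel, poch_succ, Nat.add_sub_cancel]
    push_cast
    ring

lemma poch_neg_natCast (m k : ℕ) : poch (-(m : ℂ)) k = (-1) ^ k * m.descFactorial k := by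
  rw [poch, ascPochhammer_eval_neg_eq_descPochhammer, descPochhammer_eval_eq_descFactorial]

lemma Nat.choose_mul_factorial_succ_sub {n m : ℕ} (h : n ≤ m) (k : ℕ) :
    n.choose k * (m + 1 - k).factorial = n.choose k * (m + 1 - k) * (m - k).factorial := by
  rcases le_or_gt k n with hk | hk
  · rw [show m + 1 - k = m - k + 1 by omega, Nat.factorial_succ, mul_assoc]
  · simp [Nat.choose_eq_zero_of_lt hk]

lemma sum_range_succ_choose_mul {R : Type*} [Semiring R] (f : ℕ → R) (j : ℕ) :
    ∑ r ∈ range (j + 2), ((j + 1).choose r : R) * f r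
      = ∑ r ∈ range (j + 1), (j.choose r : R) * (f r + f (r + 1)) := by
  have hshift : ∑ r ∈ range (j + 1), (j.choose (r + 1) : R) * f (r + 1) + f 0
      = ∑ r ∈ range (j + 1), (j.choose r : R) * f r := by
    have hlast : ∑ r ∈ range (j + 2), (j.choose r : R) * f r
        = ∑ r ∈ range (j + 1), (j.choose r : R) * f r := by
      simp [sum_range_succ _ (j + 1)]
    rw [← hlast, sum_range_succ' _ (j + 1)]
    simp
  rw [sum_range_succ']
  simp only [mul_add, Nat.choose_succ_succ', Nat.cast_add, add_mul, sum_add_distrib,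
    Nat.choose_zero_right, Nat.cast_one, one_mul]
  rw [add_assoc, hshift, add_comm]

noncomputable def scaledTwoF1 (n c : ℕ) (a : ℂ) : ℂ :=
  ∑ k ∈ range (n + 1), (n.choose k : ℂ) * poch a k * 2 ^ k * ((c - k).factorial : ℂ)

lemma sum_poch_div_eq_scaledTwoF1 {n c : ℕ} (h : n ≤ c) (a : ℂ) :
    ∑ k ∈ range (n + 1),
        poch (-(n : ℂ)) k * poch a k * 2 ^ k / (poch (-(c : ℂ)) k * (k.factorial : ℂ))
      = scaledTwoF1 n c a / c.factorial := by
  rw [scaledTwoF1, sum_div]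
  refine sum_congr rfl fun k hk => ?_
  have hkc : k ≤ c := by have := mem_range.mp hk; omega
  have hc : ((c - k).factorial : ℂ) * c.descFactorial k = c.factorial := by
    exact_mod_cast Nat.factorial_mul_descFactorial hkc
  have hdesc : (c.descFactorial k : ℂ) ≠ 0 := by
    exact_mod_cast (Nat.descFactorial_pos.mpr hkc).ne'
  rw [poch_neg_natCast, poch_neg_natCast, Nat.descFactorial_eq_factorial_mul_choose, ← hc]
  push_cast
  field_simp [Nat.factorial_ne_zero]

lemma scaledTwoF1_contiguous (n m : ℕ) (a : ℂ) :
    scaledTwoF1 n (n + m + 1) a + scaledTwoF1 n (n + m + 1) (a - 1)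
      = 2 * (m + 1) * scaledTwoF1 n (n + m) a := by
  set u : ℕ → ℂ := fun k =>
    k * n.choose k * 2 ^ k * ((n + m + 1 - k).factorial : ℂ) * poch a (k - 1) with hu
  have hterm : ∀ k ≤ n,
      (n.choose k : ℂ) * poch a k * 2 ^ k * ((n + m + 1 - k).factorial : ℂ)
        + n.choose k * poch (a - 1) k * 2 ^ k * ((n + m + 1 - k).factorial : ℂ)
        - 2 * (m + 1) * (n.choose k * poch a k * 2 ^ k * ((n + m - k).factorial : ℂ))
      = u (k + 1) - u k := by
    intro k hk
    have hch : (n.choose (k + 1) : ℂ) * (k + 1) = n.choose k * (n - k) := by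
      exact_mod_cast congrArg (Nat.cast (R := ℂ)) (Nat.choose_succ_right_eq n k)
    have hfac : (n.choose k : ℂ) * ((n + m + 1 - k).factorial : ℂ)
        = n.choose k * (n + m + 1 - k) * (n + m - k).factorial := by
      have := congrArg (Nat.cast (R := ℂ))
        (Nat.choose_mul_factorial_succ_sub (Nat.le_add_right n m) k)
      push_cast [Nat.cast_sub (show k ≤ n + m + 1 by omega)] at this
      exact this
    simp only [hu, Nat.add_sub_add_right, Nat.add_sub_cancel, poch_sub_one]
    push_cast
    linear_combination (2 * poch a k * 2 ^ k) * hfac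
      - (2 * poch a k * 2 ^ k * ((n + m - k).factorial : ℂ)) * hch
  rw [← sub_eq_zero, scaledTwoF1, scaledTwoF1, scaledTwoF1, mul_sum, ← sum_add_distrib,
    ← sum_sub_distrib, sum_congr rfl fun k hk => hterm k (Nat.lt_succ_iff.mp (mem_range.mp hk)),
    sum_range_sub]
  simp [hu, Nat.choose_succ_self]

lemma scaledTwoF1_succ_two_mul (n : ℕ) (a : ℂ) :
    scaledTwoF1 (n + 1) (2 * (n + 1)) a
      = 2 * (n + 1) * (a + 2 * n + 1) * scaledTwoF1 n (2 * n) a := by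
  set v : ℕ → ℂ := fun k =>
    k * (n + 1).choose k * poch a k * 2 ^ k * ((2 * n + 1 - k).factorial : ℂ) with hv
  have hterm : ∀ k ≤ n + 1,
      ((n + 1).choose k : ℂ) * poch a k * 2 ^ k * ((2 * (n + 1) - k).factorial : ℂ)
        - 2 * (n + 1) * (a + 2 * n + 1) *
          (n.choose k * poch a k * 2 ^ k * ((2 * n - k).factorial : ℂ))
      = v k - v (k + 1) := by
    intro k hk
    have hsucc : ((2 * (n + 1) - k).factorial : ℂ)
        = (2 * n + 2 - k) * (2 * n + 1 - k).factorial := by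
      rw [show 2 * (n + 1) - k = 2 * n + 1 - k + 1 by omega, Nat.factorial_succ]
      push_cast [Nat.cast_sub (show k ≤ 2 * n + 1 by omega)]
      ring
    have hfac : (n.choose k : ℂ) * ((2 * n + 1 - k).factorial : ℂ)
        = n.choose k * (2 * n + 1 - k) * (2 * n - k).factorial := by
      have := congrArg (Nat.cast (R := ℂ))
        (Nat.choose_mul_factorial_succ_sub (show n ≤ 2 * n by omega) k)
      push_cast [Nat.cast_sub (show k ≤ 2 * n + 1 by omega)] at this
      exact this
    have hcm : (n.choose k : ℂ) * (n + 1) = (n + 1).choose k * (n + 1 - k) := by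
      have := congrArg (Nat.cast (R := ℂ)) (Nat.choose_mul_succ_eq n k)
      push_cast [Nat.cast_sub hk] at this
      exact this
    have ham : ((n : ℂ) + 1) * n.choose k = (n + 1).choose (k + 1) * (k + 1) := by
      exact_mod_cast Nat.add_one_mul_choose_eq n k
    simp only [hv, Nat.add_sub_add_right, poch_succ, hsucc]
    push_cast
    linear_combination (-2 * poch a k * (a + k) * 2 ^ k * ((2 * n - k).factorial : ℂ)) * ham
      + (2 * (n + 1) * poch a k * 2 ^ k) * hfac
      - (2 * poch a k * 2 ^ k * ((2 * n + 1 - k).factorial : ℂ)) * hcm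
  have hextend : scaledTwoF1 n (2 * n) a
      = ∑ k ∈ range (n + 2),
          (n.choose k : ℂ) * poch a k * 2 ^ k * ((2 * n - k).factorial : ℂ) := by
    simp [scaledTwoF1, sum_range_succ _ (n + 1), Nat.choose_succ_self]
  rw [← sub_eq_zero, hextend, scaledTwoF1, mul_sum, ← sum_sub_distrib,
    sum_congr rfl fun k hk => hterm k (Nat.lt_succ_iff.mp (mem_range.mp hk)), sum_range_sub']
  simp [hv, Nat.choose_succ_self]

lemma scaledTwoF1_two_mul (n : ℕ) (a : ℂ) :
    scaledTwoF1 n (2 * n) a = 4 ^ n * n.factorial * poch ((a + 1) / 2) n := by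
  induction n with
  | zero => simp [scaledTwoF1, poch]
  | succ n ih =>
    rw [scaledTwoF1_succ_two_mul, ih, poch_succ, Nat.factorial_succ]
    push_cast
    ring

lemma scaledTwoF1_eq_sum_shift (n m j : ℕ) (a : ℂ) :
    2 ^ j * ((m + j).factorial : ℂ) * scaledTwoF1 n (n + m) a
      = m.factorial *
          ∑ r ∈ range (j + 1), (j.choose r : ℂ) * scaledTwoF1 n (n + m + j) (a - r) := by
  induction j with
  | zero => simp
  | succ j ih =>
    have hstep : ∀ r : ℕ, 2 * ((m + j : ℕ) + 1 : ℂ) * scaledTwoF1 n (n + m + j) (a - r)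
        = scaledTwoF1 n (n + m + (j + 1)) (a - r)
          + scaledTwoF1 n (n + m + (j + 1)) (a - (r + 1 : ℕ)) := by
      intro r
      have h := scaledTwoF1_contiguous n (m + j) (a - r)
      rw [← add_assoc] at h
      rw [← h, Nat.cast_succ, ← sub_sub]
      rfl
    calc 2 ^ (j + 1) * ((m + (j + 1)).factorial : ℂ) * scaledTwoF1 n (n + m) a
        = 2 * ((m + j : ℕ) + 1 : ℂ) *
            (2 ^ j * (m + j).factorial * scaledTwoF1 n (n + m) a) := by
          rw [← add_assoc, Nat.factorial_succ]
          push_cast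
          ring
      _ = m.factorial * ∑ r ∈ range (j + 2),
            ((j + 1).choose r : ℂ) * scaledTwoF1 n (n + m + (j + 1)) (a - r) := by
          rw [ih, sum_range_succ_choose_mul, mul_left_comm, mul_sum]
          simp only [mul_left_comm _ (j.choose _ : ℂ), hstep]

lemma scaledTwoF1_two_mul_sub {n j : ℕ} (hjn : j ≤ n) (a : ℂ) :
    scaledTwoF1 n (2 * n - j) a = 2 ^ (2 * n - j) * (n - j).factorial *
      ∑ r ∈ range (j + 1), (j.choose r : ℂ) * poch ((a + 1 - r) / 2) n := by
  have hshift := scaledTwoF1_eq_sum_shift n (n - j) j a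
  rw [show n + (n - j) = 2 * n - j by omega, show 2 * n - j + j = 2 * n by omega,
    show n - j + j = n by omega] at hshift
  simp only [scaledTwoF1_two_mul, sub_add_eq_add_sub] at hshift
  have hfour : (4 : ℂ) ^ n = 2 ^ (2 * n - j) * 2 ^ j := by
    rw [← pow_add, show 2 * n - j + j = 2 * n by omega, pow_mul]
    norm_num
  refine mul_left_cancel₀ (mul_ne_zero (pow_ne_zero j two_ne_zero)
    (Nat.cast_ne_zero.mpr n.factorial_ne_zero)) ?_
  rw [hshift, hfour, mul_sum, mul_sum, mul_sum]
  refine sum_congr rfl fun r _ => ?_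
  ring

theorem twoF1_negn_a_neg2nPj (n j : ℕ) (hjn : j ≤ n) (a : ℂ) :
    ∑ k ∈ range (n + 1),
        poch (-(n : ℂ)) k * poch a k * 2 ^ k /
          (poch (-(2 * n : ℂ) + j) k * (k.factorial : ℂ))
      = (2 : ℂ) ^ (2 * n - j) * ((n - j).factorial : ℂ) / (((2 * n - j).factorial : ℂ)) *
          ∑ r ∈ range (j + 1), (j.choose r : ℂ) * poch ((a + 1 - r) / 2) n := by
  have hbottom : -(2 * n : ℂ) + j = -((2 * n - j : ℕ) : ℂ) := by
    push_cast [Nat.cast_sub (show j ≤ 2 * n by omega)]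
    ring
  rw [hbottom, sum_poch_div_eq_scaledTwoF1 (by omega), scaledTwoF1_two_mul_sub hjn]
  ring
end
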